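/- arXiv:1909.13806 — 3 statements merged into one kernel-verified Lean document; each statement's English description precedes it below -/
import Mathlib

section
/- Let Y ⊆ ℝ^d be a nonempty closed convex set and f : ℝ^d × ℝ^d → ℝ be continuously differentiable, γ-strongly concave in y for each fixed x, with ‖∇_y f(x₁,y) − ∇_y f(x₂,y)‖ ≤ L_x ‖x₁ − x₂‖ and ‖∇_y f(x,y₁) − ∇_y f(x,y₂)‖ ≤ L_y ‖y₁ − y₂‖ for all relevant points. Let β > 0, let x^t, x^{t+1} ∈ ℝ^d, let y^{t−1} ∈ Y, and set y^t = proj_Y(y^{t−1} + β ∇_y f(x^t, y^{t−1})) and y^{t+1} = proj_Y(y^t + β ∇_y f(x^{t+1}, y^t)). Then (2/(β²γ))‖y^{t+1} − y^t‖² ≤ (2/(β²γ))‖y^t − y^{t−1}‖² + (2L_x²/(βγ²))‖x^{t+1} − x^t‖² + (2/β)‖y^{t+1} − y^t‖² − (4/β − 2L_y²/γ)‖y^t − y^{t−1}‖². -/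
open scoped RealInnerProductSpace

/-- Partial gradient of `f(x,y)` with respect to `y`. -/
noncomputable def gradY {d : ℕ} (f : EuclideanSpace ℝ (Fin d) → EuclideanSpace ℝ (Fin d) → ℝ)
    (x y : EuclideanSpace ℝ (Fin d)) : EuclideanSpace ℝ (Fin d) :=
  gradient (f x) y

/-- `p` is the Euclidean projection of `a` onto `C`:
the (unique, for `C` closed convex) minimizer of `‖z - a‖` over `z ∈ C`. -/
def IsProjOn {d : ℕ} (C : Set (EuclideanSpace ℝ (Fin d)))
    (a p : EuclideanSpace ℝ (Fin d)) : Prop :=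
  p ∈ C ∧ ∀ z ∈ C, ‖p - a‖ ≤ ‖z - a‖

lemma isProjOn_inner_le {d : ℕ} {Y : Set (EuclideanSpace ℝ (Fin d))}
    (hYconvex : Convex ℝ Y) {a p : EuclideanSpace ℝ (Fin d)}
    (hp : IsProjOn Y a p) {z : EuclideanSpace ℝ (Fin d)} (hz : z ∈ Y) :
    ⟪a - p, z - p⟫ ≤ 0 := by
  haveI : Nonempty Y := ⟨⟨p, hp.1⟩⟩
  have h1 : ‖a - p‖ ≤ ⨅ q : Y, ‖a - q‖ :=
    le_ciInf fun q => by rw [norm_sub_rev a p, norm_sub_rev a q]; exact hp.2 q q.2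
  have h2 : (⨅ q : Y, ‖a - q‖) ≤ ‖a - p‖ :=
    ciInf_le ⟨0, fun _ ⟨_, h⟩ => h ▸ norm_nonneg _⟩ (⟨p, hp.1⟩ : Y)
  exact (norm_eq_iInf_iff_real_inner_le_zero hYconvex hp.1).mp (le_antisymm h1 h2) z hz

lemma scalar_aux (s u v e : ℝ) (hs : 0 < s) (hu : 0 ≤ u) (hv : 0 ≤ v) (he : 0 ≤ e)
    (hle : e ≤ u + v) : s * (1 - s) * e ^ 2 ≤ s * u ^ 2 + v ^ 2 := by
  rcases le_or_gt 1 s with h | h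
  · nlinarith [sq_nonneg e, sq_nonneg u, sq_nonneg v,
      mul_nonneg (mul_nonneg hs.le (by linarith : (0:ℝ) ≤ s - 1)) (sq_nonneg e)]
  · have he2 : e ^ 2 ≤ (u + v) ^ 2 := by nlinarith
    nlinarith [sq_nonneg (s * u - (1 - s) * v),
      mul_nonneg (mul_nonneg hs.le (by linarith : (0:ℝ) ≤ 1 - s)) (sub_nonneg.mpr he2),
      mul_nonneg hu hv, mul_nonneg hs.le (sq_nonneg v)]

/-- Abstract core estimate in a real inner product space. -/
lemma core_aux {E : Type*} [NormedAddCommGroup E] [InnerProductSpace ℝ E]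
    (γ β Ly M : ℝ) (hγ : 0 < γ) (hβ : 0 < β)
    (w e Δx Δy : E)
    (hmono : ⟪Δy, w⟫ ≤ -γ * ‖w‖ ^ 2)
    (hΔyb : ‖Δy‖ ≤ Ly * ‖w‖)
    (hΔxb : ‖Δx‖ ≤ M)
    (hkey : ‖e‖ ^ 2 ≤ ⟪w + β • Δy, e⟫ + β * ⟪Δx, e⟫) :
    γ * (1 - β * γ) * ‖e‖ ^ 2
      ≤ γ * ((1 - 2 * β * γ + β ^ 2 * Ly ^ 2) * ‖w‖ ^ 2) + β * M ^ 2 := by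
  have hM0 : 0 ≤ M := (norm_nonneg _).trans hΔxb
  have hv0 : 0 ≤ β * M := mul_nonneg hβ.le hM0
  -- ‖e‖ ≤ ‖w + β•Δy‖ + β*M
  have hE : ‖e‖ ≤ ‖w + β • Δy‖ + β * M := by
    have c1 : ⟪w + β • Δy, e⟫ ≤ ‖w + β • Δy‖ * ‖e‖ := real_inner_le_norm _ _
    have c2 : ⟪Δx, e⟫ ≤ M * ‖e‖ :=
      (real_inner_le_norm _ _).trans (mul_le_mul_of_nonneg_right hΔxb (norm_nonneg _))
    have c2' : β * ⟪Δx, e⟫ ≤ β * M * ‖e‖ := by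
      calc β * ⟪Δx, e⟫ ≤ β * (M * ‖e‖) := mul_le_mul_of_nonneg_left c2 hβ.le
        _ = β * M * ‖e‖ := by ring
    have hsq : ‖e‖ * ‖e‖ ≤ (‖w + β • Δy‖ + β * M) * ‖e‖ := by nlinarith [hkey]
    rcases (norm_nonneg e).eq_or_lt with h0 | h0
    · rw [← h0]; exact add_nonneg (norm_nonneg _) hv0
    · exact le_of_mul_le_mul_right hsq h0
  have hu2 : ‖w + β • Δy‖ ^ 2 ≤ (1 - 2 * β * γ + β ^ 2 * Ly ^ 2) * ‖w‖ ^ 2 := by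
    have hexp : ‖w + β • Δy‖ ^ 2
        = ‖w‖ ^ 2 + 2 * (β * ⟪Δy, w⟫) + β ^ 2 * ‖Δy‖ ^ 2 := by
      rw [norm_add_sq_real, real_inner_smul_right, norm_smul, real_inner_comm]
      rw [Real.norm_eq_abs, abs_of_pos hβ]
      ring
    have hΔy2 : ‖Δy‖ ^ 2 ≤ Ly ^ 2 * ‖w‖ ^ 2 := by
      nlinarith [norm_nonneg Δy, hΔyb]
    nlinarith [mul_le_mul_of_nonneg_left hmono hβ.le, sq_nonneg β]
  have hS := scalar_aux (β * γ) ‖w + β • Δy‖ (β * M) ‖e‖ (mul_pos hβ hγ)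
    (norm_nonneg _) hv0 (norm_nonneg _) hE
  have hKu : β * γ * ‖w + β • Δy‖ ^ 2
      ≤ β * γ * ((1 - 2 * β * γ + β ^ 2 * Ly ^ 2) * ‖w‖ ^ 2) :=
    mul_le_mul_of_nonneg_left hu2 (mul_pos hβ hγ).le
  have hmul : β * (γ * (1 - β * γ) * ‖e‖ ^ 2)
      ≤ β * (γ * ((1 - 2 * β * γ + β ^ 2 * Ly ^ 2) * ‖w‖ ^ 2) + β * M ^ 2) := by
    nlinarith [hS, hKu]
  exact le_of_mul_le_mul_left hmul hβ

/-- Under strong concavity of `f` in `y` and Lipschitz continuity of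
`∇_y f` in `x` and in `y`, one projected-ascent step at `t` and at `t+1` satisfies
`(2/(β²γ))‖y^{t+1} - y^t‖² ≤ (2/(β²γ))‖y^t - y^{t-1}‖² + (2L_x²/(βγ²))‖x^{t+1} - x^t‖²
 + (2/β)‖y^{t+1} - y^t‖² - (4/β - 2L_y²/γ)‖y^t - y^{t-1}‖²`. -/
theorem zo_minmax_pga_successive_difference
    {d : ℕ} (Y : Set (EuclideanSpace ℝ (Fin d)))
    (hYne : Y.Nonempty) (hYclosed : IsClosed Y) (hYconvex : Convex ℝ Y)
    (f : EuclideanSpace ℝ (Fin d) → EuclideanSpace ℝ (Fin d) → ℝ)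
    (hf : ContDiff ℝ 1 (Function.uncurry f))
    (γ Lx Ly β : ℝ) (hγ : 0 < γ) (hβ : 0 < β)
    (hconc : ∀ x y₁ y₂ : EuclideanSpace ℝ (Fin d),
      f x y₁ ≤ f x y₂ + ⟪gradY f x y₂, y₁ - y₂⟫ - γ / 2 * ‖y₁ - y₂‖ ^ 2)
    (hLx : ∀ (x₁ x₂ y : EuclideanSpace ℝ (Fin d)),
      ‖gradY f x₁ y - gradY f x₂ y‖ ≤ Lx * ‖x₁ - x₂‖)
    (hLy : ∀ (x y₁ y₂ : EuclideanSpace ℝ (Fin d)),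
      ‖gradY f x y₁ - gradY f x y₂‖ ≤ Ly * ‖y₁ - y₂‖)
    (xt xt1 : EuclideanSpace ℝ (Fin d))
    (ytm1 yt yt1 : EuclideanSpace ℝ (Fin d)) (hytm1 : ytm1 ∈ Y)
    (hyt : IsProjOn Y (ytm1 + β • gradY f xt ytm1) yt)
    (hyt1 : IsProjOn Y (yt + β • gradY f xt1 yt) yt1) :
    2 / (β ^ 2 * γ) * ‖yt1 - yt‖ ^ 2 ≤
      2 / (β ^ 2 * γ) * ‖yt - ytm1‖ ^ 2
      + 2 * Lx ^ 2 / (β * γ ^ 2) * ‖xt1 - xt‖ ^ 2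
      + 2 / β * ‖yt1 - yt‖ ^ 2
      - (4 / β - 2 * Ly ^ 2 / γ) * ‖yt - ytm1‖ ^ 2 := by
  -- strong monotonicity of the gradient in y
  have hmono : ⟪gradY f xt yt - gradY f xt ytm1, yt - ytm1⟫ ≤ -γ * ‖yt - ytm1‖ ^ 2 := by
    have hc1 := hconc xt yt ytm1
    have hc2 := hconc xt ytm1 yt
    have hn : ‖ytm1 - yt‖ = ‖yt - ytm1‖ := norm_sub_rev _ _
    have hi : ⟪gradY f xt yt, ytm1 - yt⟫ = -⟪gradY f xt yt, yt - ytm1⟫ := by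
      rw [show ytm1 - yt = -(yt - ytm1) from by abel, inner_neg_right]
    have hs : ⟪gradY f xt yt - gradY f xt ytm1, yt - ytm1⟫
        = ⟪gradY f xt yt, yt - ytm1⟫ - ⟪gradY f xt ytm1, yt - ytm1⟫ := inner_sub_left _ _ _
    rw [hn, hi] at hc2
    linarith
  -- key inner-product inequality from the two variational inequalities
  have h1 : ⟪(ytm1 + β • gradY f xt ytm1) - yt, yt1 - yt⟫ ≤ 0 :=
    isProjOn_inner_le hYconvex hyt hyt1.1
  have h2 : ⟪(yt + β • gradY f xt1 yt) - yt1, yt - yt1⟫ ≤ 0 :=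
    isProjOn_inner_le hYconvex hyt1 hyt.1
  have hkey : ‖yt1 - yt‖ ^ 2
      ≤ ⟪(yt - ytm1) + β • (gradY f xt yt - gradY f xt ytm1), yt1 - yt⟫
        + β * ⟪gradY f xt1 yt - gradY f xt yt, yt1 - yt⟫ := by
    rw [show yt - yt1 = -(yt1 - yt) from by abel, inner_neg_right] at h2
    have hnorm : ⟪yt1 - yt, yt1 - yt⟫ = ‖yt1 - yt‖ ^ 2 := real_inner_self_eq_norm_sq _
    simp only [inner_sub_left, inner_add_left, inner_smul_left, real_inner_smul_left,
      RCLike.conj_to_real] at h1 h2 hnorm ⊢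
    linarith
  -- apply the abstract core lemma
  have hcore := core_aux γ β Ly (Lx * ‖xt1 - xt‖) hγ hβ
    (yt - ytm1) (yt1 - yt)
    (gradY f xt1 yt - gradY f xt yt) (gradY f xt yt - gradY f xt ytm1)
    hmono (hLy xt yt ytm1) (hLx xt1 xt yt) hkey
  -- clear denominators
  have hβ0 : β ≠ 0 := hβ.ne'
  have hγ0 : γ ≠ 0 := hγ.ne'
  rw [← sub_nonneg]
  have hid : 2 / (β ^ 2 * γ) * ‖yt - ytm1‖ ^ 2
      + 2 * Lx ^ 2 / (β * γ ^ 2) * ‖xt1 - xt‖ ^ 2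
      + 2 / β * ‖yt1 - yt‖ ^ 2
      - (4 / β - 2 * Ly ^ 2 / γ) * ‖yt - ytm1‖ ^ 2
      - 2 / (β ^ 2 * γ) * ‖yt1 - yt‖ ^ 2
      = (2 / (β ^ 2 * γ ^ 2)) *
        ((γ * ((1 - 2 * β * γ + β ^ 2 * Ly ^ 2) * ‖yt - ytm1‖ ^ 2)
            + β * (Lx * ‖xt1 - xt‖) ^ 2)
          - γ * (1 - β * γ) * ‖yt1 - yt‖ ^ 2) := by
    field_simp
    ring
  rw [hid]
  have hpos : (0:ℝ) ≤ 2 / (β ^ 2 * γ ^ 2) := by positivity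
  exact mul_nonneg hpos (sub_nonneg.mpr hcore)
end

section
/- Let Y ⊆ ℝ^d be a nonempty closed convex set, let β > 0, and let f : ℝ^d × ℝ^d → ℝ be continuously differentiable. Let x^t, x^{t+1} ∈ ℝ^d, y^{t−1} ∈ Y, y^t = proj_Y(y^{t−1} + β ∇_y f(x^t, y^{t−1})), y^{t+1} = proj_Y(y^t + β ∇_y f(x^{t+1}, y^t)), and v^{t+1} = (y^{t+1} − y^t) − (y^t − y^{t−1}). Then (1/β)⟨v^{t+1}, y^{t+1} − y^t⟩ ≤ ⟨∇_y f(x^{t+1}, y^t) − ∇_y f(x^t, y^t), y^{t+1} − y^t⟩ + ⟨∇_y f(x^t, y^t) − ∇_y f(x^t, y^{t−1}), y^{t+1} − y^t⟩. -/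
open scoped RealInnerProductSpace

lemma isProjOn_inner {d : ℕ} {C : Set (EuclideanSpace ℝ (Fin d))} (hC : Convex ℝ C)
    {a p : EuclideanSpace ℝ (Fin d)} (h : IsProjOn C a p) :
    ∀ z ∈ C, ⟪a - p, z - p⟫ ≤ 0 := by
  haveI : Nonempty C := ⟨⟨p, h.1⟩⟩
  have hb : BddBelow (Set.range fun w : C => ‖a - (w : EuclideanSpace ℝ (Fin d))‖) := by
    refine ⟨0, ?_⟩; rintro x ⟨w, rfl⟩; positivity
  have heq : ‖a - p‖ = ⨅ w : C, ‖a - (w : EuclideanSpace ℝ (Fin d))‖ := by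
    refine le_antisymm (le_ciInf fun w => ?_) (ciInf_le hb ⟨p, h.1⟩)
    rw [norm_sub_rev, norm_sub_rev a]; exact h.2 w w.2
  exact (norm_eq_iInf_iff_real_inner_le_zero hC h.1).mp heq

/-- For two successive projected gradient-ascent steps
`y^t = proj_Y(y^{t-1} + β ∇_y f(x^t, y^{t-1}))`, `y^{t+1} = proj_Y(y^t + β ∇_y f(x^{t+1}, y^t))`,
and `v^{t+1} = (y^{t+1} - y^t) - (y^t - y^{t-1})`, one has
`(1/β)⟨v^{t+1}, y^{t+1} - y^t⟩ ≤ ⟨∇_y f(x^{t+1},y^t) - ∇_y f(x^t,y^t), y^{t+1} - y^t⟩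
+ ⟨∇_y f(x^t,y^t) - ∇_y f(x^t,y^{t-1}), y^{t+1} - y^t⟩`. -/

theorem zo_minmax_pga_optimality_cross_inequality
    {d : ℕ} (Y : Set (EuclideanSpace ℝ (Fin d)))
    (hYne : Y.Nonempty) (hYclosed : IsClosed Y) (hYconvex : Convex ℝ Y)
    (f : EuclideanSpace ℝ (Fin d) → EuclideanSpace ℝ (Fin d) → ℝ)
    (hf : ContDiff ℝ 1 (Function.uncurry f))
    (β : ℝ) (hβ : 0 < β)
    (xt xt1 : EuclideanSpace ℝ (Fin d))
    (ytm1 yt yt1 : EuclideanSpace ℝ (Fin d)) (hytm1 : ytm1 ∈ Y)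
    (hyt : IsProjOn Y (ytm1 + β • gradY f xt ytm1) yt)
    (hyt1 : IsProjOn Y (yt + β • gradY f xt1 yt) yt1) :
    1 / β * ⟪(yt1 - yt) - (yt - ytm1), yt1 - yt⟫ ≤
      ⟪gradY f xt1 yt - gradY f xt yt, yt1 - yt⟫
      + ⟪gradY f xt yt - gradY f xt ytm1, yt1 - yt⟫ := by
  have h1 := isProjOn_inner hYconvex hyt yt1 hyt1.1
  have h2 := isProjOn_inner hYconvex hyt1 yt hyt.1
  set g1 := gradY f xt ytm1
  set g2 := gradY f xt1 yt
  have e1 : ⟪(ytm1 + β • g1) - yt, yt1 - yt⟫ ≤ 0 := h1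
  have e2 : ⟪(yt + β • g2) - yt1, yt - yt1⟫ ≤ 0 := h2
  have key : ⟪(yt1 - yt) - (yt - ytm1), yt1 - yt⟫ ≤ β * ⟪g2 - g1, yt1 - yt⟫ := by
    have := add_nonpos e1 e2
    have expand : ⟪(ytm1 + β • g1) - yt, yt1 - yt⟫ + ⟪(yt + β • g2) - yt1, yt - yt1⟫
        = β * ⟪g1 - g2, yt1 - yt⟫ + ⟪(ytm1 - yt) + (yt1 - yt), yt1 - yt⟫ := by
      simp only [inner_sub_left, inner_add_left, inner_sub_right, real_inner_smul_left,
        inner_sub_left]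
      ring
    rw [expand] at this
    have expand2 : ⟪(yt1 - yt) - (yt - ytm1), yt1 - yt⟫
        = ⟪(ytm1 - yt) + (yt1 - yt), yt1 - yt⟫ := by
      simp only [inner_sub_left, inner_add_left]; ring
    have : ⟪(ytm1 - yt) + (yt1 - yt), yt1 - yt⟫ ≤ β * ⟪g2 - g1, yt1 - yt⟫ := by
      have h3 : ⟪g2 - g1, yt1 - yt⟫ = -⟪g1 - g2, yt1 - yt⟫ := by
        simp [inner_sub_left]
      nlinarith [this]
    linarith [expand2 ▸ this]
  have rhs : ⟪g2 - gradY f xt yt, yt1 - yt⟫ + ⟪gradY f xt yt - g1, yt1 - yt⟫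
      = ⟪g2 - g1, yt1 - yt⟫ := by
    simp only [inner_sub_left]; ring
  rw [rhs]
  rw [div_mul_eq_mul_div, div_le_iff₀ hβ, one_mul]
  linarith [key]
end

section
/- Let Y ⊆ ℝ^d be a nonempty closed convex set and f : ℝ^d × ℝ^d → ℝ continuously differentiable, γ-strongly concave in y for fixed x, with ‖∇_y f(x₁,y) − ∇_y f(x₂,y)‖ ≤ L_x ‖x₁ − x₂‖ and ‖∇_y f(x,y₁) − ∇_y f(x,y₂)‖ ≤ L_y ‖y₁ − y₂‖. Let β > 0, x^t, x^{t+1} ∈ ℝ^d, y^{t−1} ∈ Y, y^t = proj_Y(y^{t−1} + β ∇_y f(x^t, y^{t−1})), y^{t+1} = proj_Y(y^t + β ∇_y f(x^{t+1}, y^t)). Then f(x^{t+1},y^{t+1}) + (2/(β²γ) + 1/(2β))‖y^{t+1} − y^t‖² − 4(1/β − L_y²/(2γ))‖y^{t+1} − y^t‖² ≤ f(x^{t+1},y^t) + (2/(β²γ) + 1/(2β))‖y^t − y^{t−1}‖² − 4(1/β − L_y²/(2γ))‖y^t − y^{t−1}‖² − (1/(2β) − 2L_y²/γ)‖y^{t+1}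 − y^t‖² + (2L_x²/(γ²β) + β L_x²/2)‖x^{t+1} − x^t‖². -/
open scoped RealInnerProductSpace

set_option maxHeartbeats 1000000

private lemma mainScalar (σ w P s R : ℝ) (hσ : 0 < σ) (hw : 0 ≤ w) (hP : 0 ≤ P) (hs : 0 ≤ s)
    (h1 : s^2 ≤ R) (h2 : R ≤ (w+P)*s) :
    2*σ^2*R ≤ (6*σ^2+σ^3-4*σ)*s^2 + 4*σ*w^2 + (4+σ^2)*P^2 := by
  have hρ : (0:ℝ) ≤ w + P := add_nonneg hw hP
  have hss : s ≤ w + P := by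
    rcases hs.eq_or_lt with h0|h0
    · rw [← h0]; exact hρ
    · have h : s*s ≤ (w+P)*s := by nlinarith
      exact le_of_mul_le_mul_right h h0
  have hR2 : 2*σ^2*R ≤ 2*σ^2*((w+P)*s) :=
    mul_le_mul_of_nonneg_left h2 (by positivity)
  rcases le_or_gt (σ^2+5*σ-4) 0 with hc|hc
  · have hf2 : 0 ≤ 2*σ^2*(w+P) - (6*σ^2+σ^3-4*σ)*((w+P)+s) := by
      nlinarith [mul_nonneg (mul_nonneg hσ.le (neg_nonneg.mpr hc)) (by linarith : (0:ℝ) ≤ (w+P)+s),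
        mul_nonneg (sq_nonneg σ) (by linarith : (0:ℝ) ≤ (w+P)-s)]
    have hstep : 2*σ^2*((w+P)*s) - (6*σ^2+σ^3-4*σ)*s^2
        ≤ (2*σ^2 - (6*σ^2+σ^3-4*σ))*(w+P)^2 := by
      nlinarith [mul_nonneg (by linarith : (0:ℝ) ≤ (w+P)-s) hf2]
    have hI : (2*σ^2 - (6*σ^2+σ^3-4*σ))*(w+P)^2 ≤ 4*σ*w^2 + (4+σ^2)*P^2 := by
      nlinarith [sq_nonneg (σ^2*(4+σ)*w - σ*(4-4*σ-σ^2)*P),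
        mul_nonneg (mul_nonneg (mul_nonneg hσ.le (mul_pos hσ hσ).le)
          (by nlinarith : (0:ℝ) ≤ 20+8*σ+σ^2)) (sq_nonneg P),
        mul_pos (mul_pos hσ hσ) (by linarith : (0:ℝ) < 4+σ), mul_nonneg hw hP]
    linarith
  · have hm : (0:ℝ) < σ^2+6*σ-4 := by linarith
    have hE2 : 0 ≤ 3*σ^4+38*σ^3+88*σ^2-200*σ+96 := by
      nlinarith [sq_nonneg (σ - 4/5), mul_nonneg hσ.le (sq_nonneg (σ - 11/10)),
        mul_nonneg (mul_nonneg hσ.le hσ.le) (sq_nonneg (σ+1))]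
    have ha' : (0:ℝ) < 3*σ^3+24*σ^2-16*σ := by
      have h9 : 0 < 9*σ - 4 := by nlinarith
      nlinarith
    have hD : 0 ≤ 3*σ^7+38*σ^6+104*σ^5-8*σ^4+528*σ^3-768*σ^2+256*σ := by
      nlinarith [mul_nonneg hσ.le (sq_nonneg (σ^2+5*σ-4)),
        mul_nonneg (mul_nonneg hσ.le hσ.le) hc.le,
        mul_nonneg (mul_nonneg (mul_nonneg hσ.le hσ.le) hσ.le) hE2]
    have hII : σ^3*(w+P)^2 ≤ (σ^2+6*σ-4)*(4*σ*w^2+(4+σ^2)*P^2) := by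
      have key : (3*σ^3+24*σ^2-16*σ) *
          ((σ^2+6*σ-4)*(4*σ*w^2+(4+σ^2)*P^2) - σ^3*(w+P)^2)
          = ((3*σ^3+24*σ^2-16*σ)*w - σ^3*P)^2
            + (3*σ^7+38*σ^6+104*σ^5-8*σ^4+528*σ^3-768*σ^2+256*σ)*P^2 := by ring
      have hn : 0 ≤ (3*σ^3+24*σ^2-16*σ) *
          ((σ^2+6*σ-4)*(4*σ*w^2+(4+σ^2)*P^2) - σ^3*(w+P)^2) := by
        rw [key]; exact add_nonneg (sq_nonneg _) (mul_nonneg hD (sq_nonneg P))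
      nlinarith [(mul_nonneg_iff_of_pos_left ha').mp hn]
    have hsq : 0 ≤ σ*((σ^2+6*σ-4)*s - σ*(w+P))^2 := mul_nonneg hσ.le (sq_nonneg _)
    have h5 : 2*σ^2*((w+P)*s)*(σ^2+6*σ-4)
        ≤ ((6*σ^2+σ^3-4*σ)*s^2 + 4*σ*w^2+(4+σ^2)*P^2)*(σ^2+6*σ-4) := by
      nlinarith [hII, hsq]
    have h6 := le_of_mul_le_mul_right h5 hm
    linarith

private lemma keyScalar (β γ Lx Ly w s t u R : ℝ) (hβ : 0 < β) (hγ : 0 < γ)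
    (hw : 0 ≤ w) (hs : 0 ≤ s)
    (hLxu : 0 ≤ Lx*u)
    (h1 : s^2 ≤ R) (h2 : R ≤ (w + β*(Lx*u))*s)
    (h3 : w^2 ≤ t^2 - 2*β*γ*t^2 + β^2*(Ly^2*t^2)) :
    R/β - γ/2*s^2 ≤ (2/(β^2*γ) + 1/(2*β))*t^2 - 4*(1/β - Ly^2/(2*γ))*t^2
      - ((2/(β^2*γ) + 1/(2*β)) - 4*(1/β - Ly^2/(2*γ)))*s^2
      - (1/(2*β) - 2*Ly^2/γ)*s^2 + (2*Lx^2/(γ^2*β) + β*Lx^2/2)*u^2 := by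
  have hσ : 0 < β*γ := mul_pos hβ hγ
  have hmain := mainScalar (β*γ) w (β*(Lx*u)) s R hσ hw (mul_nonneg hβ.le hLxu) hs h1 h2
  have h3s : 4*(β*γ)*w^2 ≤ 4*(β*γ)*(t^2 - 2*β*γ*t^2 + β^2*(Ly^2*t^2)) :=
    mul_le_mul_of_nonneg_left h3 (by positivity)
  have hE : 0 ≤ (4*β*γ - 7*β^2*γ^2 + 4*β^3*γ*Ly^2)*(t^2 - s^2)
      - (β^2*γ^2 - 4*β^3*γ*Ly^2)*s^2 + (4*β^2 + β^4*γ^2)*(Lx*u)^2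
      + β^3*γ^3*s^2 - 2*β^2*γ^2*R := by
    nlinarith [hmain, h3s, sq_nonneg (β*γ*t)]
  have hβ' : β ≠ 0 := ne_of_gt hβ
  have hγ' : γ ≠ 0 := ne_of_gt hγ
  rw [← sub_nonneg]
  have hiden : (2/(β^2*γ) + 1/(2*β))*t^2 - 4*(1/β - Ly^2/(2*γ))*t^2
      - ((2/(β^2*γ) + 1/(2*β)) - 4*(1/β - Ly^2/(2*γ)))*s^2
      - (1/(2*β) - 2*Ly^2/γ)*s^2 + (2*Lx^2/(γ^2*β) + β*Lx^2/2)*u^2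
      - (R/β - γ/2*s^2)
      = ((4*β*γ - 7*β^2*γ^2 + 4*β^3*γ*Ly^2)*(t^2 - s^2)
      - (β^2*γ^2 - 4*β^3*γ*Ly^2)*s^2 + (4*β^2 + β^4*γ^2)*(Lx*u)^2
      + β^3*γ^3*s^2 - 2*β^2*γ^2*R) / (2*β^3*γ^2) := by
    field_simp
    ring
  rw [hiden]
  positivity

private lemma proj_vi {d : ℕ} {Y : Set (EuclideanSpace ℝ (Fin d))} (hY : Convex ℝ Y)
    {a p : EuclideanSpace ℝ (Fin d)} (h : IsProjOn Y a p)
    {z : EuclideanSpace ℝ (Fin d)} (hz : z ∈ Y) : ⟪a - p, z - p⟫ ≤ 0 := by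
  haveI : Nonempty ↑Y := ⟨⟨p, h.1⟩⟩
  have hbdd : BddBelow (Set.range fun w : Y => ‖a - (w : EuclideanSpace ℝ (Fin d))‖) := by
    refine ⟨0, ?_⟩
    rintro x ⟨w, rfl⟩
    exact norm_nonneg _
  have h1 : ‖a - p‖ = ⨅ w : Y, ‖a - (w : EuclideanSpace ℝ (Fin d))‖ := by
    refine le_antisymm (le_ciInf fun w => ?_) ?_
    · rw [norm_sub_rev a p, norm_sub_rev a (w : EuclideanSpace ℝ (Fin d))]
      exact h.2 w w.2
    · exact ciInf_le hbdd ⟨p, h.1⟩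
  exact (norm_eq_iInf_iff_real_inner_le_zero hY h.1).mp h1 z hz

/-- Descent lemma for the potential function of the one-sided setting:
`f(x^{t+1},y^{t+1}) + (2/(β²γ) + 1/(2β))‖y^{t+1}-y^t‖² - 4(1/β - L_y²/(2γ))‖y^{t+1}-y^t‖²
 ≤ f(x^{t+1},y^t) + (2/(β²γ) + 1/(2β))‖y^t-y^{t-1}‖² - 4(1/β - L_y²/(2γ))‖y^t-y^{t-1}‖²
 - (1/(2β) - 2L_y²/γ)‖y^{t+1}-y^t‖² + (2L_x²/(γ²β) + βL_x²/2)‖x^{t+1}-x^t‖²`. -/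
theorem zo_minmax_potential_descent_one_sided
    {d : ℕ} (Y : Set (EuclideanSpace ℝ (Fin d)))
    (hYne : Y.Nonempty) (hYclosed : IsClosed Y) (hYconvex : Convex ℝ Y)
    (f : EuclideanSpace ℝ (Fin d) → EuclideanSpace ℝ (Fin d) → ℝ)
    (hf : ContDiff ℝ 1 (Function.uncurry f))
    (γ Lx Ly β : ℝ) (hγ : 0 < γ) (hβ : 0 < β)
    (hconc : ∀ x y₁ y₂ : EuclideanSpace ℝ (Fin d),
      f x y₁ ≤ f x y₂ + ⟪gradY f x y₂, y₁ - y₂⟫ - γ / 2 * ‖y₁ - y₂‖ ^ 2)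
    (hLx : ∀ (x₁ x₂ y : EuclideanSpace ℝ (Fin d)),
      ‖gradY f x₁ y - gradY f x₂ y‖ ≤ Lx * ‖x₁ - x₂‖)
    (hLy : ∀ (x y₁ y₂ : EuclideanSpace ℝ (Fin d)),
      ‖gradY f x y₁ - gradY f x y₂‖ ≤ Ly * ‖y₁ - y₂‖)
    (xt xt1 : EuclideanSpace ℝ (Fin d))
    (ytm1 yt yt1 : EuclideanSpace ℝ (Fin d)) (hytm1 : ytm1 ∈ Y)
    (hyt : IsProjOn Y (ytm1 + β • gradY f xt ytm1) yt)
    (hyt1 : IsProjOn Y (yt + β • gradY f xt1 yt) yt1) :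
    f xt1 yt1 + (2 / (β ^ 2 * γ) + 1 / (2 * β)) * ‖yt1 - yt‖ ^ 2
      - 4 * (1 / β - Ly ^ 2 / (2 * γ)) * ‖yt1 - yt‖ ^ 2 ≤
    f xt1 yt + (2 / (β ^ 2 * γ) + 1 / (2 * β)) * ‖yt - ytm1‖ ^ 2
      - 4 * (1 / β - Ly ^ 2 / (2 * γ)) * ‖yt - ytm1‖ ^ 2
      - (1 / (2 * β) - 2 * Ly ^ 2 / γ) * ‖yt1 - yt‖ ^ 2
      + (2 * Lx ^ 2 / (γ ^ 2 * β) + β * Lx ^ 2 / 2) * ‖xt1 - xt‖ ^ 2 := by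
  set g1 : EuclideanSpace ℝ (Fin d) := gradY f xt1 yt with hg1
  set g0 : EuclideanSpace ℝ (Fin d) := gradY f xt ytm1 with hg0
  set gm : EuclideanSpace ℝ (Fin d) := gradY f xt1 ytm1 with hgm
  set s : ℝ := ‖yt1 - yt‖ with hsdef
  set t : ℝ := ‖yt - ytm1‖ with htdef
  set u : ℝ := ‖xt1 - xt‖ with hudef
  set wv : EuclideanSpace ℝ (Fin d) := (yt - ytm1) + β • (g1 - gm) with hwv
  set w : ℝ := ‖wv‖ with hwdef
  -- variational inequalities
  have hVI1 : ⟪(yt + β • g1) - yt1, yt - yt1⟫ ≤ 0 := proj_vi hYconvex hyt1 hyt.1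
  have hVI0 : ⟪(ytm1 + β • g0) - yt, yt1 - yt⟫ ≤ 0 := proj_vi hYconvex hyt hyt1.1
  -- expand VI1 : s^2 ≤ β * ⟪g1, yt1 - yt⟫
  have hs2 : s^2 ≤ β * ⟪g1, yt1 - yt⟫ := by
    have e : (yt + β • g1) - yt1 = β • g1 - (yt1 - yt) := by abel
    have e2 : yt - yt1 = -(yt1 - yt) := by abel
    rw [e, e2, inner_neg_right, inner_sub_left, real_inner_smul_left,
      real_inner_self_eq_norm_sq] at hVI1
    linarith
  -- expand VI0 : β * ⟪g0, yt1 - yt⟫ ≤ ⟪yt - ytm1, yt1 - yt⟫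
  have hVI0' : β * ⟪g0, yt1 - yt⟫ ≤ ⟪yt - ytm1, yt1 - yt⟫ := by
    have e : (ytm1 + β • g0) - yt = β • g0 - (yt - ytm1) := by abel
    rw [e, inner_sub_left, real_inner_smul_left] at hVI0
    linarith
  set R : ℝ := ⟪yt - ytm1, yt1 - yt⟫ + β * ⟪g1 - g0, yt1 - yt⟫ with hRdef
  have hsplit : ⟪g1 - g0, yt1 - yt⟫ = ⟪g1, yt1 - yt⟫ - ⟪g0, yt1 - yt⟫ :=
    inner_sub_left _ _ _
  have hgR : β * ⟪g1, yt1 - yt⟫ ≤ R := by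
    rw [hRdef, hsplit]; nlinarith [hVI0']
  have h1 : s^2 ≤ R := le_trans hs2 hgR
  -- R ≤ (w + β*(Lx*u))*s
  have hLxu : 0 ≤ Lx * u := le_trans (norm_nonneg _) (hLx xt1 xt ytm1)
  have h2 : R ≤ (w + β*(Lx*u))*s := by
    have e3 : g1 - g0 = (g1 - gm) + (gm - g0) := by abel
    have e4 : ⟪g1 - g0, yt1 - yt⟫ = ⟪g1 - gm, yt1 - yt⟫ + ⟪gm - g0, yt1 - yt⟫ := by
      rw [e3, inner_add_left]
    have e5 : ⟪yt - ytm1, yt1 - yt⟫ + β * ⟪g1 - gm, yt1 - yt⟫ = ⟪wv, yt1 - yt⟫ := by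
      rw [hwv, inner_add_left, real_inner_smul_left]
    have b1 : ⟪wv, yt1 - yt⟫ ≤ w * s := real_inner_le_norm _ _
    have b2 : ⟪gm - g0, yt1 - yt⟫ ≤ (Lx*u) * s := by
      calc ⟪gm - g0, yt1 - yt⟫ ≤ ‖gm - g0‖ * s := real_inner_le_norm _ _
        _ ≤ (Lx*u) * s := mul_le_mul_of_nonneg_right (hLx xt1 xt ytm1) (norm_nonneg _)
    have b3 : β * ⟪gm - g0, yt1 - yt⟫ ≤ β * ((Lx*u) * s) :=
      mul_le_mul_of_nonneg_left b2 hβ.le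
    rw [hRdef, e4]
    nlinarith [b1, b3]
  -- w^2 bound
  have hmono : ⟪g1 - gm, yt - ytm1⟫ ≤ -(γ * t^2) := by
    have c1 := hconc xt1 yt ytm1
    have c2 := hconc xt1 ytm1 yt
    have e6 : ytm1 - yt = -(yt - ytm1) := by abel
    rw [e6, inner_neg_right, norm_neg] at c2
    have e7 : ⟪g1 - gm, yt - ytm1⟫ = ⟪g1, yt - ytm1⟫ - ⟪gm, yt - ytm1⟫ :=
      inner_sub_left _ _ _
    rw [e7]
    rw [← hgm, ← htdef] at c1
    rw [← hg1, ← htdef] at c2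
    linarith
  have hLyn : ‖g1 - gm‖^2 ≤ Ly^2*t^2 := by
    have hl := hLy xt1 yt ytm1
    rw [← hg1, ← hgm, ← htdef] at hl
    nlinarith [norm_nonneg (g1 - gm)]
  have h3 : w^2 ≤ t^2 - 2*β*γ*t^2 + β^2*(Ly^2*t^2) := by
    have hexp : w^2 = t^2 + 2*(β*⟪g1 - gm, yt - ytm1⟫) + β^2*‖g1 - gm‖^2 := by
      have hn := norm_add_sq_real (yt - ytm1) (β • (g1 - gm))
      rw [real_inner_smul_right, norm_smul, Real.norm_eq_abs, abs_of_pos hβ,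
        real_inner_comm] at hn
      rw [hwdef, hwv, hn, ← htdef]
      ring
    have hb := mul_le_mul_of_nonneg_left hmono hβ.le
    nlinarith [mul_le_mul_of_nonneg_left hLyn (sq_nonneg β)]
  -- assemble
  have hkey := keyScalar β γ Lx Ly w s t u R hβ hγ (norm_nonneg _) (norm_nonneg _)
    hLxu h1 h2 h3
  have hf1 : f xt1 yt1 ≤ f xt1 yt + ⟪g1, yt1 - yt⟫ - γ/2 * s^2 := by
    have := hconc xt1 yt1 yt
    rw [← hg1, ← hsdef] at this
    linarith
  have hdiv : ⟪g1, yt1 - yt⟫ ≤ R/β := (le_div_iff₀ hβ).mpr (by linarith)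
  linarith
end
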